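/- Let F be a rigid field and φ₁, φ₂, φ₃ anisotropic quadratic forms over F such that φ₁ ⊥ φ₂ is anisotropic. Then φ₁ ⊥ φ₂ ⊥ φ₃ is isotropic if and only if: (1) at least one of φ₁ ⊥ φ₃ and φ₂ ⊥ φ₃ is isotropic; or (2) s(F) = 2 and D_F(φ₁) ∩ D_F(φ₂) ∩ D_F(φ₃) ≠ ∅. -/

import Mathlib

namespace PN

variable (F : Type*) [Field F]

/-- The diagonal quadratic form with diagonal entries given by a list. -/
noncomputable def qf (l : List F) : QuadraticForm F (Fin l.length → F) :=
  QuadraticMap.weightedSumSquares F l.get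

/-- Isometry of diagonal quadratic forms. -/
def Isom (l l' : List F) : Prop :=
  Nonempty (QuadraticMap.IsometryEquiv (qf F l) (qf F l'))

/-- Diagonalization of the sum of `k` hyperbolic planes. -/
def hypList (k : ℕ) : List F :=
  List.replicate k (1 : F) ++ List.replicate k (-1 : F)

/-- A (diagonalized) form is hyperbolic if it is isometric to a sum of hyperbolic planes. -/
def IsHyp (l : List F) : Prop := ∃ k : ℕ, Isom F l (hypList F k)

def negList (l : List F) : List F := l.map (fun x => -x)

/-- Witt equivalence of diagonalized quadratic forms. -/
def WittEquiv (l l' : List F) : Prop := IsHyp F (l ++ negList F l')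

/-- Nondegeneracy: all diagonal entries are nonzero. -/
def Nondeg (l : List F) : Prop := ∀ x ∈ l, x ≠ 0

/-- Diagonalization of the Pfister form `⟪a₁,…,aₙ⟫ = ⟨1,-a₁⟩⊗⋯⊗⟨1,-aₙ⟩`. -/
def pfister : List F → List F
  | [] => [1]
  | a :: l => pfister l ++ (pfister l).map (fun x => -a * x)

/-- `l` is a diagonalization of an `n`-fold Pfister form. -/
def IsPfister (n : ℕ) (l : List F) : Prop :=
  ∃ a : Fin n → F, (∀ i, a i ≠ 0) ∧ l = pfister F (List.ofFn a)

/-- `l` is a diagonalization of a form similar to an `n`-fold Pfister form. -/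
def IsGP (n : ℕ) (l : List F) : Prop :=
  ∃ c : F, c ≠ 0 ∧ ∃ p : List F, IsPfister F n p ∧ l = p.map (fun x => c * x)

/-- The Witt class of `l` lies in `IⁿF`, i.e. it is a sum of classes of
forms similar to `n`-fold Pfister forms. -/
def InI (n : ℕ) (l : List F) : Prop :=
  ∃ L : List (List F), (∀ p ∈ L, IsGP F n p) ∧ WittEquiv F l L.flatten

/-- The (scaled) `n`-Pfister number of `l` (`⊤` if the Witt class of `l` is not in `IⁿF`). -/
noncomputable def GPnum (n : ℕ) (l : List F) : ℕ∞ :=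
  sInf {k : ℕ∞ | ∃ L : List (List F), (L.length : ℕ∞) = k ∧
    (∀ p ∈ L, IsGP F n p) ∧ WittEquiv F l L.flatten}

/-- The unscaled `n`-Pfister number: least number of genuine `n`-fold Pfister
forms with signs `±1` whose Witt classes sum to that of `l`. -/
noncomputable def Pnum (n : ℕ) (l : List F) : ℕ∞ :=
  sInf {k : ℕ∞ | ∃ L : List (List F), (L.length : ℕ∞) = k ∧
    (∀ p ∈ L, IsPfister F n p ∨ ∃ q : List F, IsPfister F n q ∧ p = negList F q) ∧
    WittEquiv F l L.flatten}

/-- `GP_n(F, d)`: the supremum of `n`-Pfister numbers of forms in `IⁿF` of dimension `≤ d`. -/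
noncomputable def GPsup (n : ℕ) (d : ℕ) : ℕ∞ :=
  ⨆ l ∈ {l : List F | Nondeg F l ∧ InI F n l ∧ l.length ≤ d}, GPnum F n l

/-- `a` is a nonzero value represented by the form `l`. -/
def Represents (l : List F) (a : F) : Prop := a ≠ 0 ∧ ∃ x, qf F l x = a

/-- The set of nonzero represented values. -/
def D (l : List F) : Set F := {a | Represents F l a}

def Anisotropic (l : List F) : Prop := (qf F l).Anisotropic

def SameSquareClass (a b : F) : Prop := ∃ c : F, c ≠ 0 ∧ a = b * c ^ 2

/-- A field is rigid if every anisotropic binary form represents at most two square classes. -/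
def Rigid : Prop := ∀ x y : F, x ≠ 0 → y ≠ 0 → Anisotropic F [x, y] →
  ∃ u v : F, ∀ a : F, Represents F [x, y] a →
    SameSquareClass F a u ∨ SameSquareClass F a v

/-- The level `s(F)`: the least `n` such that `-1` is a sum of `n` squares (`⊤` if none). -/
noncomputable def level : ℕ∞ :=
  sInf {m : ℕ∞ | ∃ n : ℕ, m = (n : ℕ∞) ∧ ∃ f : Fin n → F, (-1 : F) = ∑ i, f i ^ 2}

/-- `l` is (isometric to) a subform of `l'`. -/
def Subform (l l' : List F) : Prop := ∃ r : List F, Isom F l' (l ++ r)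

end PN

/-! An isotropic vector of `φ₁ ⊥ φ₂ ⊥ φ₃` yields values `a`, `b`, `c` of the three forms with
`a + b + c = 0`. If `-c = a + b` is in the square class of `a` (resp. `b`), then `φ₁ ⊥ φ₃`
(resp. `φ₂ ⊥ φ₃`) is isotropic. Otherwise `a`, `b`, `a + b` are values of the anisotropic binary
form `⟨a, b⟩`, so by rigidity `a = b s²`. Then `-1` and `1 + s²` are not squares, and rigidity of
`⟨1, -(1 + s²)⟩` forces `-(1 + s²)` to be a square: `s(F) = 2`, and `b` is a common value of the
three forms. Conversely, `-1 = s² + t²` and a common value `b` give `b + s² b + t² b = 0`. -/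

namespace PN

variable {F : Type*} [Field F]

lemma qf_apply (l : List F) (x : Fin l.length → F) :
    qf F l x = ∑ i, l.get i * (x i * x i) := by
  simp [qf, smul_eq_mul]

lemma qf_pair (a b : F) (v : Fin 2 → F) : qf F [a, b] v = a * v 0 ^ 2 + b * v 1 ^ 2 := by
  rw [qf_apply]
  exact (Fin.sum_univ_two _).trans (by simp [sq])

lemma qf_smul (l : List F) (t : F) (x : Fin l.length → F) :
    qf F l (t • x) = t ^ 2 * qf F l x := by
  rw [QuadraticMap.map_smul, smul_eq_mul, sq]

def appendEquiv (l l' : List F) :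
    (Fin l.length → F) × (Fin l'.length → F) ≃ (Fin (l ++ l').length → F) :=
  (Fin.appendEquiv _ _).trans ((finCongr List.length_append.symm).arrowCongr (Equiv.refl F))

lemma qf_appendEquiv (l l' : List F) (p : (Fin l.length → F) × (Fin l'.length → F)) :
    qf F (l ++ l') (appendEquiv l l' p) = qf F l p.1 + qf F l' p.2 := by
  rw [qf_apply, qf_apply, qf_apply,
    ← (finCongr List.length_append.symm).sum_comp, Fin.sum_univ_add]
  congr 1 <;> refine Finset.sum_congr rfl fun i _ => ?_ <;>
    simp [appendEquiv, List.getElem_append_left, List.getElem_append_right]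

lemma appendEquiv_eq_zero_iff {l l' : List F} {p : (Fin l.length → F) × (Fin l'.length → F)} :
    appendEquiv l l' p = 0 ↔ p = 0 :=
  (appendEquiv l l').eq_symm_apply.symm

lemma not_anisotropic_append_iff {l l' : List F} :
    ¬ Anisotropic F (l ++ l') ↔
      ∃ y z, (y ≠ 0 ∨ z ≠ 0) ∧ qf F l y + qf F l' z = 0 := by
  rw [Anisotropic, QuadraticMap.not_anisotropic_iff_exists,
    (appendEquiv l l').symm.exists_congr_left, Prod.exists]
  simp only [Equiv.symm_symm, appendEquiv_eq_zero_iff, qf_appendEquiv, ne_eq, Prod.mk_eq_zero,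
    not_and_or]

lemma anisotropic_append_iff {l l' : List F} :
    Anisotropic F (l ++ l') ↔ ∀ y z, qf F l y + qf F l' z = 0 → y = 0 ∧ z = 0 := by
  rw [← not_iff_not, not_anisotropic_append_iff]
  simp only [not_forall, not_and_or, exists_prop, ne_eq, and_comm]

lemma not_anisotropic_append_append_iff {l₁ l₂ l₃ : List F} :
    ¬ Anisotropic F (l₁ ++ l₂ ++ l₃) ↔
      ∃ x y z, (x ≠ 0 ∨ y ≠ 0 ∨ z ≠ 0) ∧ qf F l₁ x + qf F l₂ y + qf F l₃ z = 0 := by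
  rw [not_anisotropic_append_iff, (appendEquiv l₁ l₂).symm.exists_congr_left, Prod.exists]
  simp only [Equiv.symm_symm, appendEquiv_eq_zero_iff, qf_appendEquiv, ne_eq, Prod.mk_eq_zero,
    not_and_or, or_assoc]

namespace SameSquareClass

lemma refl (a : F) : SameSquareClass F a a := ⟨1, one_ne_zero, by ring⟩

lemma symm {a b : F} (h : SameSquareClass F a b) : SameSquareClass F b a := by
  obtain ⟨c, hc, rfl⟩ := h
  exact ⟨c⁻¹, inv_ne_zero hc, by field_simp⟩

lemma trans {a b c : F} (hab : SameSquareClass F a b) (hbc : SameSquareClass F b c) :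
    SameSquareClass F a c := by
  obtain ⟨u, hu, rfl⟩ := hab
  obtain ⟨v, hv, rfl⟩ := hbc
  exact ⟨v * u, mul_ne_zero hv hu, by ring⟩

lemma ne_zero_right {a b : F} (h : SameSquareClass F a b) (ha : a ≠ 0) : b ≠ 0 := by
  obtain ⟨c, -, rfl⟩ := h
  exact left_ne_zero_of_mul ha

end SameSquareClass

lemma Represents.of_sameSquareClass {l : List F} {a b : F} (ha : Represents F l a)
    (hba : SameSquareClass F b a) : Represents F l b := by
  obtain ⟨ha0, x, rfl⟩ := ha
  obtain ⟨c, hc, rfl⟩ := hba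
  exact ⟨mul_ne_zero ha0 (pow_ne_zero 2 hc), c • x, by rw [qf_smul, mul_comm]⟩

lemma not_anisotropic_append_of_represents {l l' : List F} {a : F} (h : Represents F l a)
    (h' : Represents F l' (-a)) : ¬ Anisotropic F (l ++ l') := by
  obtain ⟨ha, x, rfl⟩ := h
  obtain ⟨-, y, hy⟩ := h'
  exact not_anisotropic_append_iff.mpr
    ⟨x, y, Or.inl (ne_of_apply_ne (qf F l) (by rwa [map_zero])), by rw [hy, add_neg_cancel]⟩

lemma anisotropic_pair_iff {a b : F} :
    Anisotropic F [a, b] ↔ ∀ s t : F, a * s ^ 2 + b * t ^ 2 = 0 → s = 0 ∧ t = 0 := by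
  refine ⟨fun h s t hst => ?_, fun h v hv => ?_⟩
  · have := h ![s, t] (by rw [qf_pair]; exact hst)
    exact ⟨congrFun this 0, congrFun this 1⟩
  · obtain ⟨h0, h1⟩ := h (v 0) (v 1) (by rwa [← qf_pair])
    funext i
    fin_cases i <;> assumption

lemma anisotropic_pair_of_anisotropic_append {l l' : List F} {a b : F}
    (h : Anisotropic F (l ++ l')) (ha : Represents F l a) (hb : Represents F l' b) :
    Anisotropic F [a, b] := by
  obtain ⟨ha0, x, rfl⟩ := ha
  obtain ⟨hb0, y, rfl⟩ := hb
  refine anisotropic_pair_iff.mpr fun s t hst => ?_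
  obtain ⟨hsx, hty⟩ := anisotropic_append_iff.mp h (s • x) (t • y)
    (by rw [qf_smul, qf_smul]; linear_combination hst)
  exact ⟨(smul_eq_zero.mp hsx).resolve_right (ne_of_apply_ne (qf F l) (by rwa [map_zero])),
    (smul_eq_zero.mp hty).resolve_right (ne_of_apply_ne (qf F l') (by rwa [map_zero]))⟩

lemma ne_zero_of_anisotropic_pair {a b : F} (h : Anisotropic F [a, b]) :
    a ≠ 0 ∧ b ≠ 0 ∧ a + b ≠ 0 := by
  rw [anisotropic_pair_iff] at h
  refine ⟨fun ha => ?_, fun hb => ?_, fun hab => ?_⟩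
  · exact one_ne_zero (h 1 0 (by simp [ha])).1
  · exact one_ne_zero (h 0 1 (by simp [hb])).2
  · exact one_ne_zero (h 1 1 (by simp [hab])).1

lemma Rigid.sameSquareClass_of_anisotropic_pair (hF : Rigid F) {a b : F}
    (h : Anisotropic F [a, b]) :
    SameSquareClass F (a + b) a ∨ SameSquareClass F (a + b) b ∨ SameSquareClass F a b := by
  obtain ⟨ha, hb, hab⟩ := ne_zero_of_anisotropic_pair h
  obtain ⟨u, v, huv⟩ := hF a b ha hb h
  have ra := huv a ⟨ha, ![1, 0], by rw [qf_pair]; simp⟩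
  have rb := huv b ⟨hb, ![0, 1], by rw [qf_pair]; simp⟩
  have rab := huv (a + b) ⟨hab, ![1, 1], by rw [qf_pair]; simp⟩
  rcases ra with ha | ha <;> rcases rb with hb | hb <;> rcases rab with hab | hab <;>
    first
    | exact Or.inl (hab.trans ha.symm)
    | exact Or.inr (Or.inl (hab.trans hb.symm))
    | exact Or.inr (Or.inr (ha.trans hb.symm))

lemma level_eq_two_of_neg_one_eq_sq_add_sq (h : ¬ IsSquare (-1 : F)) {s t : F}
    (hst : -1 = s ^ 2 + t ^ 2) : level F = 2 := by
  refine le_antisymm (sInf_le ⟨2, rfl, ![s, t], by simpa [Fin.sum_univ_two] using hst⟩) ?_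
  refine le_sInf ?_
  rintro m ⟨n, rfl, f, hf⟩
  match n with
  | 0 => simp at hf
  | 1 => exact absurd ⟨f 0, by simpa [sq] using hf⟩ h
  | k + 2 => exact_mod_cast Nat.le_add_left 2 k

lemma exists_neg_one_eq_sq_add_sq_of_level_eq_two (h : level F = 2) :
    ∃ s t : F, -1 = s ^ 2 + t ^ 2 := by
  have hne : {m : ℕ∞ | ∃ n : ℕ, m = n ∧ ∃ f : Fin n → F, -1 = ∑ i, f i ^ 2}.Nonempty := by
    by_contra hc
    rw [Set.not_nonempty_iff_eq_empty] at hc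
    rw [level, hc, sInf_empty] at h
    exact absurd h (by norm_num)
  have hmem := csInf_mem hne
  rw [← level, h] at hmem
  obtain ⟨n, hn, f, hf⟩ := hmem
  obtain rfl : n = 2 := by exact_mod_cast hn.symm
  exact ⟨f 0, f 1, by rwa [Fin.sum_univ_two] at hf⟩

/-- Rigidity applied to `⟨1, -(1 + s²)⟩`, whose values `1`, `-1 · s²` and `-(1 + s²)` cannot
lie in three different square classes. -/
lemma Rigid.isSquare_neg_one_add_sq (hF : Rigid F) (h : ¬ IsSquare (-1 : F)) {s : F}
    (hs : ¬ IsSquare (1 + s ^ 2)) : IsSquare (-(1 + s ^ 2)) := by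
  have hs0 : s ≠ 0 := by rintro rfl; exact hs ⟨1, by ring⟩
  have hpair : Anisotropic F [1, -(1 + s ^ 2)] := by
    refine anisotropic_pair_iff.mpr fun u v huv => ?_
    by_cases hv : v = 0
    · subst hv
      exact ⟨by simpa using huv, rfl⟩
    · exact absurd ⟨u / v, by field_simp; linear_combination -huv⟩ hs
  rcases hF.sameSquareClass_of_anisotropic_pair hpair with ⟨c, hc, hcs⟩ | ⟨c, hc, hcs⟩ | ⟨c, hc, hcs⟩
  · exact absurd ⟨c / s, by field_simp; linear_combination hcs⟩ h
  · exact absurd ⟨s / c, by field_simp; linear_combination hcs⟩ hs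
  · exact ⟨1 / c, by field_simp; linear_combination -hcs⟩

lemma Rigid.level_eq_two_of_sameSquareClass (hF : Rigid F) {a b : F}
    (h : Anisotropic F [a, b]) (hab : SameSquareClass F a b)
    (hab' : ¬ SameSquareClass F (a + b) b) :
    level F = 2 ∧ SameSquareClass F (-(a + b)) b := by
  obtain ⟨s, -, rfl⟩ := hab
  have hb : b ≠ 0 := (ne_zero_of_anisotropic_pair h).2.1
  have h1 : ¬ IsSquare (-1 : F) := by
    rintro ⟨t, ht⟩
    exact one_ne_zero (anisotropic_pair_iff.mp h 1 (t * s)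
      (by linear_combination (-(b * s ^ 2)) * ht)).1
  have hs : 1 + s ^ 2 ≠ 0 := fun hs => h1 ⟨s, by linear_combination -hs⟩
  have hs' : ¬ IsSquare (1 + s ^ 2) := by
    rintro ⟨e, he⟩
    have he0 : e ≠ 0 := by rintro rfl; exact hs (by linear_combination he)
    exact hab' ⟨e, he0, by linear_combination b * he⟩
  obtain ⟨e, he⟩ := hF.isSquare_neg_one_add_sq h1 hs'
  have he0 : e ≠ 0 := by rintro rfl; exact hs (by linear_combination -he)
  exact ⟨level_eq_two_of_neg_one_eq_sq_add_sq h1 (s := s) (t := e) (by linear_combination he),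
    e, he0, by linear_combination b * he⟩

lemma Rigid.isotropic_or_level_eq_two_of_represents_neg_add (hF : Rigid F) {l₁ l₂ l₃ : List F}
    (h₁₂ : Anisotropic F (l₁ ++ l₂)) (x : Fin l₁.length → F) (y : Fin l₂.length → F)
    (hc : Represents F l₃ (-(qf F l₁ x + qf F l₂ y))) :
    (¬ Anisotropic F (l₁ ++ l₃) ∨ ¬ Anisotropic F (l₂ ++ l₃)) ∨
      (level F = 2 ∧ (D F l₁ ∩ D F l₂ ∩ D F l₃).Nonempty) := by
  set a := qf F l₁ x
  set b := qf F l₂ y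
  have hab : a + b ≠ 0 := neg_ne_zero.mp hc.1
  by_cases hA : SameSquareClass F (a + b) a
  · have ha : Represents F l₁ a := ⟨hA.ne_zero_right hab, x, rfl⟩
    exact Or.inl (Or.inl (not_anisotropic_append_of_represents (ha.of_sameSquareClass hA) hc))
  by_cases hB : SameSquareClass F (a + b) b
  · have hb : Represents F l₂ b := ⟨hB.ne_zero_right hab, y, rfl⟩
    exact Or.inl (Or.inr (not_anisotropic_append_of_represents (hb.of_sameSquareClass hB) hc))
  have ha : Represents F l₁ a :=
    ⟨fun ha : a = 0 => hB (by rw [ha, zero_add]; exact .refl b), x, rfl⟩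
  have hb : Represents F l₂ b :=
    ⟨fun hb : b = 0 => hA (by rw [hb, add_zero]; exact .refl a), y, rfl⟩
  have hpair := anisotropic_pair_of_anisotropic_append h₁₂ ha hb
  have hab' : SameSquareClass F a b :=
    ((hF.sameSquareClass_of_anisotropic_pair hpair).resolve_left hA).resolve_left hB
  obtain ⟨hlevel, hcb⟩ := hF.level_eq_two_of_sameSquareClass hpair hab' hB
  exact Or.inr ⟨hlevel, b, ⟨ha.of_sameSquareClass hab'.symm, hb⟩, hc.of_sameSquareClass hcb.symm⟩

lemma not_anisotropic_append_append_of_left {l₁ l₂ l₃ : List F}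
    (h : ¬ Anisotropic F (l₁ ++ l₃)) : ¬ Anisotropic F (l₁ ++ l₂ ++ l₃) := by
  obtain ⟨x, z, hne, hsum⟩ := not_anisotropic_append_iff.mp h
  exact not_anisotropic_append_append_iff.mpr ⟨x, 0, z, by tauto, by simpa using hsum⟩

lemma not_anisotropic_append_append_of_right {l₁ l₂ l₃ : List F}
    (h : ¬ Anisotropic F (l₂ ++ l₃)) : ¬ Anisotropic F (l₁ ++ l₂ ++ l₃) := by
  obtain ⟨y, z, hne, hsum⟩ := not_anisotropic_append_iff.mp h
  exact not_anisotropic_append_append_iff.mpr ⟨0, y, z, by tauto, by simpa using hsum⟩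

lemma not_anisotropic_append_append_of_level_eq_two {l₁ l₂ l₃ : List F} (hlevel : level F = 2)
    {a : F} (ha : a ∈ D F l₁ ∩ D F l₂ ∩ D F l₃) : ¬ Anisotropic F (l₁ ++ l₂ ++ l₃) := by
  obtain ⟨⟨⟨ha, x, rfl⟩, -, y, hy⟩, -, z, hz⟩ := ha
  obtain ⟨s, t, hst⟩ := exists_neg_one_eq_sq_add_sq_of_level_eq_two hlevel
  refine not_anisotropic_append_append_iff.mpr
    ⟨x, s • y, t • z, Or.inl (ne_of_apply_ne (qf F l₁) (by rwa [map_zero])), ?_⟩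
  rw [qf_smul, qf_smul, hy, hz]
  linear_combination (-qf F l₁ x) * hst

end PN

open PN in
theorem stmt_13_general (F : Type*) [Field F]
    (hrigid : PN.Rigid F) (φ₁ φ₂ φ₃ : List F)
    (h₁₂ : PN.Anisotropic F (φ₁ ++ φ₂)) :
    ¬ PN.Anisotropic F (φ₁ ++ φ₂ ++ φ₃) ↔
      ((¬ PN.Anisotropic F (φ₁ ++ φ₃) ∨ ¬ PN.Anisotropic F (φ₂ ++ φ₃)) ∨
        (PN.level F = 2 ∧ (PN.D F φ₁ ∩ PN.D F φ₂ ∩ PN.D F φ₃).Nonempty)) := by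
  refine ⟨fun hiso => ?_, ?_⟩
  · obtain ⟨x, y, z, hne, hsum⟩ := not_anisotropic_append_append_iff.mp hiso
    by_cases hab : qf F φ₁ x + qf F φ₂ y = 0
    · obtain ⟨rfl, rfl⟩ := anisotropic_append_iff.mp h₁₂ x y hab
      refine Or.inl (Or.inl (not_anisotropic_append_iff.mpr ⟨0, z, by simpa using hne, ?_⟩))
      rw [map_zero, zero_add]
      linear_combination hsum - hab
    exact hrigid.isotropic_or_level_eq_two_of_represents_neg_add h₁₂ x y
      ⟨neg_ne_zero.mpr hab, z, by linear_combination hsum⟩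
  · rintro ((h | h) | ⟨hlevel, a, ha⟩)
    · exact not_anisotropic_append_append_of_left h
    · exact not_anisotropic_append_append_of_right h
    · exact not_anisotropic_append_append_of_level_eq_two hlevel ha

theorem stmt_13 (F : Type*) [Field F] (hF : (2 : F) ≠ 0)
    (hrigid : PN.Rigid F) (φ₁ φ₂ φ₃ : List F)
    (h₁ : PN.Anisotropic F φ₁) (h₂ : PN.Anisotropic F φ₂) (h₃ : PN.Anisotropic F φ₃)
    (h₁₂ : PN.Anisotropic F (φ₁ ++ φ₂))
    (hn₁ : PN.Nondeg F φ₁) (hn₂ : PN.Nondeg F φ₂) (hn₃ : PN.Nondeg F φ₃) :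
    ¬ PN.Anisotropic F (φ₁ ++ φ₂ ++ φ₃) ↔
      ((¬ PN.Anisotropic F (φ₁ ++ φ₃) ∨ ¬ PN.Anisotropic F (φ₂ ++ φ₃)) ∨
        (PN.level F = 2 ∧ (PN.D F φ₁ ∩ PN.D F φ₂ ∩ PN.D F φ₃).Nonempty)) :=
  stmt_13_general F hrigid φ₁ φ₂ φ₃ h₁₂
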